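/- For each index i let 𝒫ᵢ′ ⊆ 𝒫ᵢ be nonempty and put 𝒫′ = 𝒫₁′ × ⋯ × 𝒫ₙ′. Assume (H1), (H2), (H3), and (H4); assume A(P) is nonsingular for every P ∈ 𝒫′; and assume that for every U ∈ ℝⁿ, if sup_{P∈𝒫′}{−A(P)U + y(P)} = 0 then sup_{P∈𝒫}{−A(P)U + y(P)} ≤ 0 entrywise. Then the ε-policy-iteration sequence computed over the restricted control set 𝒫′ converges to a vector U that is the unique solution of the Bellman problem over the full control set 𝒫. -/

import Mathlib

open Filter Topology Finset

open scoped Classical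

noncomputable section

/-- Row `i` of `A` is strictly diagonally dominant (SDD). -/
def SDDRow {n : ℕ} (A : Matrix (Fin n) (Fin n) ℝ) (i : Fin n) : Prop :=
  ∑ j ∈ Finset.univ.erase i, |A i j| < |A i i|

/-- `A` is weakly diagonally dominant (WDD). -/
def WDD {n : ℕ} (A : Matrix (Fin n) (Fin n) ℝ) : Prop :=
  ∀ i, ∑ j ∈ Finset.univ.erase i, |A i j| ≤ |A i i|

/-- `A` is a Z-matrix: nonpositive off-diagonal entries. -/
def ZMat {n : ℕ} (A : Matrix (Fin n) (Fin n) ℝ) : Prop :=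
  ∀ i j, i ≠ j → A i j ≤ 0

/-- Row-decoupled data. -/
def RowDecoupled {n : ℕ} {P : Fin n → Type*}
    (A : (∀ i, P i) → Matrix (Fin n) (Fin n) ℝ)
    (y : (∀ i, P i) → (Fin n → ℝ)) : Prop :=
  ∀ p q : ∀ i, P i, ∀ i, p i = q i →
    (∀ j, A p i j = A q i j) ∧ y p i = y q i

/-- `U` solves the Bellman problem `sup_{P∈𝒫} {−A(P)U + y(P)} = 0`. -/
def IsBellmanSol {n : ℕ} {P : Fin n → Type*}
    (A : (∀ i, P i) → Matrix (Fin n) (Fin n) ℝ)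
    (y : (∀ i, P i) → (Fin n → ℝ)) (U : Fin n → ℝ) : Prop :=
  ∀ i, IsLUB (Set.range fun p => y p i - (A p).mulVec U i) 0

/-- (H1): `P ↦ A(P)⁻¹` is bounded on the set of controls with nonsingular matrix. -/
def H1 {n : ℕ} {P : Fin n → Type*}
    (A : (∀ i, P i) → Matrix (Fin n) (Fin n) ℝ) : Prop :=
  ∃ C, ∀ p, IsUnit (A p).det → ∀ i j, |(A p)⁻¹ i j| ≤ C

/-- (H2): `A` and `y` are bounded. -/
def H2 {n : ℕ} {P : Fin n → Type*}
    (A : (∀ i, P i) → Matrix (Fin n) (Fin n) ℝ)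
    (y : (∀ i, P i) → (Fin n → ℝ)) : Prop :=
  ∃ C, ∀ p, (∀ i j, |A p i j| ≤ C) ∧ ∀ i, |y p i| ≤ C

/-- (H3): every `A(P)` is a WDD Z-matrix with nonnegative diagonal entries whose diagonal
entries are at most `1` on rows that are not SDD. -/
def H3 {n : ℕ} {P : Fin n → Type*}
    (A : (∀ i, P i) → Matrix (Fin n) (Fin n) ℝ) : Prop :=
  ∀ p, ZMat (A p) ∧ WDD (A p) ∧ (∀ i, 0 ≤ A p i i) ∧
    ∀ i, ¬ SDDRow (A p) i → A p i i ≤ 1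

/-- `ŷ(P)ᵢ = y(P)ᵢ` if row `i` of `A(P)` is not SDD, and `−∞` otherwise. -/
def yhat {n : ℕ} {P : Fin n → Type*}
    (A : (∀ i, P i) → Matrix (Fin n) (Fin n) ℝ)
    (y : (∀ i, P i) → (Fin n → ℝ)) (p : ∀ i, P i) (i : Fin n) : EReal :=
  if SDDRow (A p) i then ⊥ else ((y p i : ℝ) : EReal)

/-- The operator `𝕄U = U + 𝔸U` on vectors with entries in `ℝ ∪ {−∞}`, where
`[𝔸U]ᵢ = sup_P [−A(P)U + ŷ(P)]ᵢ`, computed with the conventions `r + (−∞) = −∞`,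
`t·(−∞) = −∞` for `t > 0` and `0·(−∞) = 0`; entrywise this reads
`[𝕄U]ᵢ = sup_P { (1 − A(P)ᵢᵢ)·Uᵢ + Σ_{j≠i} (−A(P)ᵢⱼ)·Uⱼ + ŷ(P)ᵢ }`. -/
def Mbb {n : ℕ} {P : Fin n → Type*}
    (A : (∀ i, P i) → Matrix (Fin n) (Fin n) ℝ)
    (y : (∀ i, P i) → (Fin n → ℝ)) (U : Fin n → EReal) : Fin n → EReal :=
  fun i => ⨆ p : ∀ i, P i,
    (((1 - A p i i : ℝ) : EReal) * U i
      + ∑ j ∈ Finset.univ.erase i, ((-A p i j : ℝ) : EReal) * U j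
      + yhat A y p i)

/-- (H4): consecutive applications of `𝕄` are eventually strictly suboptimal. -/
def H4 {n : ℕ} {P : Fin n → Type*}
    (A : (∀ i, P i) → Matrix (Fin n) (Fin n) ℝ)
    (y : (∀ i, P i) → (Fin n → ℝ)) : Prop :=
  ∀ (U : Fin n → ℝ) (i : Fin n), ∃ m₁ m₂ : ℕ, m₁ < m₂ ∧
    (Mbb A y)^[m₂] (fun j => ((U j : ℝ) : EReal)) i
      < (Mbb A y)^[m₁] (fun j => ((U j : ℝ) : EReal)) i

/-!
Under (H3) every `A(P)` is a WDD Z-matrix, and such a matrix is singular exactly when it has a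
trapped set: a nonempty set of non-SDD rows, hence of zero row sums, that no edge of its graph
leaves (the minimisers of a vector `v ≱ 0` with `A v ≥ 0` form one). So nonsingular `A(P)` are
monotone, and with (H1) `A(P) x ≤ η𝟙` forces `x ≤ K η` for a uniform `K`.

Policy iteration is then decreasing up to the summable errors `K εℓ` and bounded above, hence
convergent; the residuals of the limit `U*` along the chosen controls tend to zero, so `U*` solves
the restricted problem, is a subsolution of the full one by assumption, and then a solution.
A solution `V` is compared with `U*` both ways: `U* ≤ V` along the nonsingular controls `Pℓ`, and
`V ≤ U*` along nearly optimal controls for `V`. These are nonsingular: on a trapped set the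
iterates `𝕄ᵐV` drop by at most `mη`, while (H4) pushes them uniformly below `V`.
-/

open Matrix

/-- A WDD matrix is weakly chained diagonally dominant iff it has no nonempty trapped set. -/
def IsTrapped {n : ℕ} (A : Matrix (Fin n) (Fin n) ℝ) (J : Finset (Fin n)) : Prop :=
  ∀ i ∈ J, ¬ SDDRow A i ∧ ∀ j ∉ J, A i j = 0

namespace ZMat

variable {n : ℕ} {A : Matrix (Fin n) (Fin n) ℝ}

lemma sum_row_eq (hZ : ZMat A) (i : Fin n) :
    ∑ j, A i j = A i i - ∑ j ∈ univ.erase i, |A i j| := by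
  rw [← add_sum_erase _ _ (mem_univ i), sub_eq_add_neg, ← sum_neg_distrib]
  congr 1
  refine sum_congr rfl fun j hj => ?_
  rw [abs_of_nonpos (hZ i j (ne_of_mem_erase hj).symm), neg_neg]

lemma sddRow_iff (hZ : ZMat A) {i : Fin n} (hd : 0 ≤ A i i) :
    SDDRow A i ↔ 0 < ∑ j, A i j := by
  rw [SDDRow, abs_of_nonneg hd, hZ.sum_row_eq, sub_pos]

lemma sum_row_nonneg (hZ : ZMat A) (hW : WDD A) {i : Fin n} (hd : 0 ≤ A i i) :
    0 ≤ ∑ j, A i j := by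
  have := hW i
  rw [abs_of_nonneg hd] at this
  rw [hZ.sum_row_eq]
  linarith

lemma sum_row_eq_zero (hZ : ZMat A) (hW : WDD A) {i : Fin n} (hd : 0 ≤ A i i)
    (hi : ¬ SDDRow A i) : ∑ j, A i j = 0 :=
  le_antisymm (not_lt.1 fun h => hi ((hZ.sddRow_iff hd).2 h)) (hZ.sum_row_nonneg hW hd)

lemma exists_isTrapped_of_mulVec_nonneg (hZ : ZMat A) (hW : WDD A) (hd : ∀ i, 0 ≤ A i i)
    {v : Fin n → ℝ} (hv : 0 ≤ A *ᵥ v) {i₀ : Fin n} (hi₀ : v i₀ < 0) :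
    ∃ J, J.Nonempty ∧ IsTrapped A J := by
  obtain ⟨k, -, hk⟩ := exists_min_image univ v ⟨i₀, mem_univ _⟩
  have hm : v k < 0 := (hk i₀ (mem_univ _)).trans_lt hi₀
  refine ⟨univ.filter (v · = v k), ⟨k, by simp⟩, fun i hi => ?_⟩
  have hvi : v i = v k := (mem_filter.1 hi).2
  -- `(A v)ᵢ ≥ 0` is the sum of two nonpositive parts, so both vanish
  have hsplit : (A *ᵥ v) i = ∑ j, A i j * (v j - v k) + (∑ j, A i j) * v k := by
    simp only [mulVec, dotProduct, mul_sub, sum_sub_distrib, sum_mul]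
    ring
  have hterm : ∀ j, A i j * (v j - v k) ≤ 0 := fun j => by
    rcases eq_or_ne i j with rfl | hij
    · simp [hvi]
    · exact mul_nonpos_of_nonpos_of_nonneg (hZ i j hij) (sub_nonneg.2 (hk j (mem_univ _)))
  have hterms : ∑ j, A i j * (v j - v k) ≤ 0 := sum_nonpos fun j _ => hterm j
  have hrow : (∑ j, A i j) * v k ≤ 0 :=
    mul_nonpos_of_nonneg_of_nonpos (hZ.sum_row_nonneg hW (hd i)) hm.le
  have hv' : 0 ≤ (A *ᵥ v) i := hv i
  have hsum : ∑ j, A i j * (v j - v k) = 0 := by linarith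
  refine ⟨fun hsdd => ?_, fun j hj => ?_⟩
  · linarith [mul_neg_of_pos_of_neg ((hZ.sddRow_iff (hd i)).1 hsdd) hm]
  · have := (sum_eq_zero_iff_of_nonpos fun j _ => hterm j).1 hsum j (mem_univ j)
    exact (mul_eq_zero.1 this).resolve_right (sub_ne_zero.2 fun h => hj (by simp [h]))

lemma det_eq_zero_of_isTrapped (hZ : ZMat A) (hW : WDD A) (hd : ∀ i, 0 ≤ A i i)
    {J : Finset (Fin n)} (hJne : J.Nonempty) (hJ : IsTrapped A J) : A.det = 0 := by
  obtain ⟨k, hk⟩ := hJne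
  rw [twoBlockTriangular_det' A (· ∈ J) fun i hi j hj => (hJ i hi).2 j hj]
  refine mul_eq_zero_of_left ?_ _
  -- the rows in `J` are supported in `J` and sum to zero, so `𝟙` lies in the kernel of the block
  have hker : toSquareBlockProp A (· ∈ J) *ᵥ 1 = 0 := funext fun i => by
    have hsum := hZ.sum_row_eq_zero hW (hd i) (hJ i i.2).1
    rw [← sum_subset (subset_univ J) fun j _ hj => (hJ i i.2).2 j hj] at hsum
    simp only [toSquareBlockProp_def, mulVec, dotProduct, of_apply, Pi.one_apply, mul_one,
      Pi.zero_apply]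
    rwa [sum_subtype J (fun _ => Iff.rfl) (A i)] at hsum
  convert exists_mulVec_eq_zero_iff.1 ⟨1, fun h => by simpa using congrFun h ⟨k, hk⟩, hker⟩

lemma exists_isTrapped_of_det_eq_zero (hZ : ZMat A) (hW : WDD A) (hd : ∀ i, 0 ≤ A i i)
    (h : A.det = 0) : ∃ J, J.Nonempty ∧ IsTrapped A J := by
  obtain ⟨v, hv0, hv⟩ := exists_mulVec_eq_zero_iff.2 h
  obtain ⟨i, hi⟩ := Function.ne_iff.1 hv0
  rcases hi.lt_or_gt with hneg | hpos
  · exact hZ.exists_isTrapped_of_mulVec_nonneg hW hd hv.ge hneg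
  · exact hZ.exists_isTrapped_of_mulVec_nonneg hW hd (v := -v) (by simp [mulVec_neg, hv])
      (by simpa using hpos)

lemma nonneg_of_mulVec_nonneg (hZ : ZMat A) (hW : WDD A) (hd : ∀ i, 0 ≤ A i i)
    (hA : IsUnit A.det) {v : Fin n → ℝ} (hv : 0 ≤ A *ᵥ v) : 0 ≤ v := fun i => by
  by_contra! hi
  obtain ⟨J, hJne, hJ⟩ := hZ.exists_isTrapped_of_mulVec_nonneg hW hd hv hi
  exact hA.ne_zero (hZ.det_eq_zero_of_isTrapped hW hd hJne hJ)

lemma le_smul_inv_mulVec_one (hZ : ZMat A) (hW : WDD A) (hd : ∀ i, 0 ≤ A i i)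
    (hA : IsUnit A.det) {x : Fin n → ℝ} {η : ℝ} (hx : A *ᵥ x ≤ η • 1) :
    x ≤ η • (A⁻¹ *ᵥ 1) := by
  rw [← sub_nonneg]
  apply hZ.nonneg_of_mulVec_nonneg hW hd hA
  rwa [mulVec_sub, mulVec_smul, mulVec_mulVec, mul_nonsing_inv _ hA, one_mulVec, sub_nonneg]

end ZMat

lemma exists_tendsto_of_le_add_of_bddAbove {u δ : ℕ → ℝ} {B : ℝ} (hδ : ∀ m, 0 ≤ δ m)
    (hsum : Summable δ) (hu : ∀ m, u m ≤ u (m + 1) + δ m) (hB : ∀ m, u m ≤ B) :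
    ∃ a, Tendsto u atTop (𝓝 a) := by
  set S : ℕ → ℝ := fun m => ∑ k ∈ range m, δ k
  have hmono : Monotone fun m => u m + S m :=
    monotone_nat_of_le_succ fun m => by simp only [S, sum_range_succ]; linarith [hu m]
  have hbdd : BddAbove (Set.range fun m => u m + S m) := by
    refine ⟨B + ∑' k, δ k, ?_⟩
    rintro _ ⟨m, rfl⟩
    linarith [hB m, hsum.sum_le_tsum (range m) fun k _ => hδ k]
  exact ⟨_, by simpa [S] using (tendsto_atTop_ciSup hmono hbdd).sub hsum.hasSum.tendsto_sum_nat⟩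

lemma tendsto_mulVec_zero {n : ℕ} {M : ℕ → Matrix (Fin n) (Fin n) ℝ} {C : ℝ}
    (hM : ∀ ℓ i j, |M ℓ i j| ≤ C) {v : ℕ → Fin n → ℝ} (hv : Tendsto v atTop (𝓝 0)) :
    Tendsto (fun ℓ => M ℓ *ᵥ v ℓ) atTop (𝓝 0) := by
  refine tendsto_pi_nhds.2 fun i => squeeze_zero_norm (fun ℓ => ?_)
    (by simpa using hv.norm.const_mul (n * C))
  calc ‖(M ℓ *ᵥ v ℓ) i‖ ≤ ∑ j, ‖M ℓ i j * v ℓ j‖ :=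
        norm_sum_le univ fun j => M ℓ i j * v ℓ j
    _ ≤ ∑ _j : Fin n, C * ‖v ℓ‖ := sum_le_sum fun j _ => by
        rw [norm_mul, Real.norm_eq_abs]
        exact mul_le_mul (hM ℓ i j) (norm_le_pi_norm (v ℓ) j) (norm_nonneg _)
          ((abs_nonneg _).trans (hM ℓ i j))
    _ = n * C * ‖v ℓ‖ := by simp; ring

section Bellman

variable {n : ℕ} {P : Fin n → Type*} {A : (∀ i, P i) → Matrix (Fin n) (Fin n) ℝ}
  {y : (∀ i, P i) → Fin n → ℝ}

def IsInverseBound {ι : Type*} (A : ι → Matrix (Fin n) (Fin n) ℝ) (K : ℝ) : Prop :=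
  ∀ p, IsUnit (A p).det → ∀ (x : Fin n → ℝ) (η : ℝ), 0 ≤ η →
    (∀ i, (A p *ᵥ x) i ≤ η) → ∀ i, x i ≤ K * η

lemma H1.exists_isInverseBound (h1 : H1 A) (h3 : H3 A) : ∃ K, 0 ≤ K ∧ IsInverseBound A K := by
  obtain ⟨C, hC⟩ := h1
  refine ⟨n * max C 0, by positivity, fun p hp x η hη hx i => ?_⟩
  obtain ⟨hZ, hW, hd, -⟩ := h3 p
  calc x i ≤ (η • ((A p)⁻¹ *ᵥ 1)) i :=
        hZ.le_smul_inv_mulVec_one hW hd hp (fun j => by simpa using hx j) i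
    _ = η * ∑ j, (A p)⁻¹ i j := by simp [mulVec, dotProduct]
    _ ≤ η * ∑ _j : Fin n, max C 0 := by
        gcongr with j
        exact (le_abs_self _).trans ((hC p hp i j).trans (le_max_left _ _))
    _ = n * max C 0 * η := by simp; ring

def IsBellmanSubsol (A : (∀ i, P i) → Matrix (Fin n) (Fin n) ℝ) (y : (∀ i, P i) → Fin n → ℝ)
    (U : Fin n → ℝ) : Prop :=
  ∀ i p, y p i - (A p *ᵥ U) i ≤ 0

lemma IsBellmanSol.isBellmanSubsol {U : Fin n → ℝ} (hU : IsBellmanSol A y U) :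
    IsBellmanSubsol A y U :=
  fun i p => (hU i).1 ⟨p, rfl⟩

lemma isBellmanSol_of_tendsto_residual {p : ℕ → ∀ i, P i} {W : Fin n → ℝ}
    (hW : IsBellmanSubsol A y W) (hres : Tendsto (fun ℓ => y (p ℓ) - A (p ℓ) *ᵥ W) atTop (𝓝 0)) :
    IsBellmanSol A y W := fun i =>
  isLUB_of_mem_closure (by rintro _ ⟨q, rfl⟩; exact hW i q)
    (mem_closure_of_tendsto (tendsto_pi_nhds.1 hres i) (.of_forall fun ℓ => ⟨p ℓ, rfl⟩))

def mbbTerm (A : (∀ i, P i) → Matrix (Fin n) (Fin n) ℝ) (y : (∀ i, P i) → Fin n → ℝ)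
    (p : ∀ i, P i) (W : Fin n → EReal) (i : Fin n) : EReal :=
  ((1 - A p i i : ℝ) : EReal) * W i + ∑ j ∈ univ.erase i, ((-A p i j : ℝ) : EReal) * W j
    + yhat A y p i

lemma mbbTerm_le_Mbb (p : ∀ i, P i) (W : Fin n → EReal) (i : Fin n) :
    mbbTerm A y p W i ≤ Mbb A y W i :=
  le_iSup (fun q => mbbTerm A y q W i) p

lemma mbbTerm_mono (h3 : H3 A) (p : ∀ i, P i) {i : Fin n} {W W' : Fin n → EReal}
    (h : ∀ j, j = i ∨ A p i j ≠ 0 → W j ≤ W' j) : mbbTerm A y p W i ≤ mbbTerm A y p W' i := by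
  obtain ⟨hZ, -, -, hle⟩ := h3 p
  unfold mbbTerm yhat
  split_ifs with hi
  · simp
  refine add_le_add (add_le_add ?_ (sum_le_sum fun j hj => ?_)) le_rfl
  · exact mul_le_mul_of_nonneg_left (h i (.inl rfl)) (by exact_mod_cast sub_nonneg.2 (hle i hi))
  · by_cases hij : A p i j = 0
    · simp [hij]
    · exact mul_le_mul_of_nonneg_left (h j (.inr hij))
        (by exact_mod_cast neg_nonneg.2 (hZ i j (ne_of_mem_erase hj).symm))

lemma Mbb_mono (h3 : H3 A) : Monotone (Mbb A y) :=
  fun _ _ h _ => iSup_mono fun p => mbbTerm_mono h3 p fun j _ => h j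

lemma mbbTerm_coe {p : ∀ i, P i} {i : Fin n} (hi : ¬ SDDRow (A p) i) (V : Fin n → ℝ) :
    mbbTerm A y p (fun j => (V j : EReal)) i = ((V i + (y p i - (A p *ᵥ V) i) : ℝ) : EReal) := by
  have hmv : (A p *ᵥ V) i = A p i i * V i + ∑ j ∈ univ.erase i, A p i j * V j :=
    (add_sum_erase _ (fun j => A p i j * V j) (mem_univ i)).symm
  have hreal : V i + (y p i - (A p *ᵥ V) i)
      = (1 - A p i i) * V i + ∑ j ∈ univ.erase i, -A p i j * V j + y p i := by
    simp only [hmv, neg_mul, sum_neg_distrib]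
    ring
  have hsum : ((∑ j ∈ univ.erase i, -A p i j * V j : ℝ) : EReal)
      = ∑ j ∈ univ.erase i, ((-A p i j * V j : ℝ) : EReal) :=
    map_sum (⟨⟨Real.toEReal, EReal.coe_zero⟩, EReal.coe_add⟩ : ℝ →+ EReal) _ _
  simp only [mbbTerm, yhat, if_neg hi, hreal, EReal.coe_add, EReal.coe_mul, hsum]

lemma Mbb_le_self {V : Fin n → ℝ} (hV : IsBellmanSubsol A y V) :
    Mbb A y (fun j => (V j : EReal)) ≤ fun j => (V j : EReal) := fun i =>
  iSup_le fun p => show mbbTerm A y p (fun j => (V j : EReal)) i ≤ V i by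
    by_cases hi : SDDRow (A p) i
    · simp [mbbTerm, yhat, hi]
    · rw [mbbTerm_coe hi]
      exact_mod_cast by linarith [hV i p]

lemma antitone_iterate_Mbb (h3 : H3 A) {V : Fin n → ℝ} (hV : IsBellmanSubsol A y V) :
    Antitone fun m => (Mbb A y)^[m] (fun j => (V j : EReal)) := by
  refine antitone_nat_of_succ_le fun m => ?_
  rw [Function.iterate_succ_apply]
  exact (Mbb_mono h3).iterate m (Mbb_le_self hV)

lemma coe_sub_mul_le_iterate_Mbb (h3 : H3 A) {V : Fin n → ℝ} {p : ∀ i, P i}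
    {J : Finset (Fin n)} (hJ : IsTrapped (A p) J) {η : ℝ}
    (hp : ∀ i ∈ J, -η ≤ y p i - (A p *ᵥ V) i) (m : ℕ) :
    ∀ i ∈ J, ((V i - m * η : ℝ) : EReal) ≤ (Mbb A y)^[m] (fun j => (V j : EReal)) i := by
  induction m with
  | zero => simp
  | succ m ih =>
    intro i hi
    obtain ⟨hZ, hW, hd, -⟩ := h3 p
    have hshift : (A p *ᵥ (V - (m * η : ℝ) • 1)) i = (A p *ᵥ V) i := by
      rw [mulVec_sub, mulVec_smul]
      simp [mulVec, dotProduct, hZ.sum_row_eq_zero hW (hd i) (hJ i hi).1]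
    rw [Function.iterate_succ_apply']
    calc ((V i - (m + 1 : ℕ) * η : ℝ) : EReal)
        ≤ (((V - (m * η : ℝ) • 1) i + (y p i - (A p *ᵥ (V - (m * η : ℝ) • 1)) i) : ℝ) : EReal) := by
          rw [hshift]
          exact_mod_cast by simp; linarith [hp i hi]
      _ = mbbTerm A y p (fun j => ((V - (m * η : ℝ) • 1) j : EReal)) i :=
          (mbbTerm_coe (hJ i hi).1 _).symm
      _ ≤ mbbTerm A y p ((Mbb A y)^[m] fun j => (V j : EReal)) i :=
          mbbTerm_mono h3 p fun j hj => by
            have hjJ : j ∈ J := by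
              rcases hj with rfl | hij
              · exact hi
              · by_contra hj
                exact hij ((hJ i hi).2 j hj)
            simpa using ih j hjJ
      _ ≤ _ := mbbTerm_le_Mbb p _ i

lemma exists_pos_isUnit_det_of_residual_ge (h3 : H3 A) (h4 : H4 A y) {V : Fin n → ℝ}
    (hV : IsBellmanSubsol A y V) :
    ∃ η > 0, ∀ p, (∀ i, -η ≤ y p i - (A p *ᵥ V) i) → IsUnit (A p).det := by
  have hanti := antitone_iterate_Mbb h3 hV
  have hbelow : ∀ i, ∀ᶠ m in atTop, (Mbb A y)^[m] (fun j => (V j : EReal)) i < V i := fun i => by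
    obtain ⟨m₁, m₂, -, hlt⟩ := h4 V i
    exact eventually_atTop.2 ⟨m₂, fun m hm =>
      (hanti hm i).trans_lt (hlt.trans_le (hanti (Nat.zero_le m₁) i))⟩
  obtain ⟨M, hM⟩ := (eventually_all.2 hbelow).exists
  have hgap : ∀ i, ∀ᶠ η in 𝓝[>] (0 : ℝ),
      (Mbb A y)^[M] (fun j => (V j : EReal)) i < ((V i - M * η : ℝ) : EReal) := fun i => by
    have hlim : Tendsto (fun η : ℝ => ((V i - M * η : ℝ) : EReal)) (𝓝[>] 0) (𝓝 (V i)) :=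
      ((continuous_coe_real_ereal.comp (continuous_const.sub (continuous_const.mul
        continuous_id))).tendsto' 0 _ (by simp)).mono_left nhdsWithin_le_nhds
    exact hlim.eventually_const_lt (hM i)
  obtain ⟨η, hηM, hη⟩ := ((eventually_all.2 hgap).and self_mem_nhdsWithin).exists
  refine ⟨η, hη, fun p hp => ?_⟩
  obtain ⟨hZ, hW, hd, -⟩ := h3 p
  -- a singular `A(P)` has a trapped set, on which nearly optimal `P` keeps `𝕄ᴹV ≥ V - Mη`,
  -- against the choice of `η`
  refine isUnit_iff_ne_zero.2 fun hdet => ?_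
  obtain ⟨J, ⟨i, hi⟩, hJ⟩ := hZ.exists_isTrapped_of_det_eq_zero hW hd hdet
  exact (coe_sub_mul_le_iterate_Mbb h3 hJ (fun i _ => hp i) M i hi).not_gt (hηM i)

lemma RowDecoupled.exists_residual_gt (hrd : RowDecoupled A y) {V : Fin n → ℝ}
    (hV : IsBellmanSol A y V) {η : ℝ} (hη : 0 < η) :
    ∃ p, ∀ i, -η < y p i - (A p *ᵥ V) i := by
  have hrow : ∀ i, ∃ q : ∀ i, P i, -η < y q i - (A q *ᵥ V) i := fun i => by
    obtain ⟨_, ⟨q, rfl⟩, hq, -⟩ := (hV i).exists_between (neg_lt_zero.2 hη)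
    exact ⟨q, hq⟩
  choose q hq using hrow
  refine ⟨fun i => q i i, fun i => ?_⟩
  obtain ⟨hA, hy⟩ := hrd (fun i => q i i) (q i) i rfl
  simpa [mulVec, dotProduct, hA, hy] using hq i

theorem IsBellmanSol.le_of_isBellmanSubsol (hrd : RowDecoupled A y) (h3 : H3 A) (h4 : H4 A y)
    {K : ℝ} (hK : IsInverseBound A K) {V W : Fin n → ℝ} (hV : IsBellmanSol A y V)
    (hW : IsBellmanSubsol A y W) : V ≤ W := by
  obtain ⟨η₀, hη₀, hunit⟩ := exists_pos_isUnit_det_of_residual_ge h3 h4 hV.isBellmanSubsol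
  intro i
  have hlim : Tendsto (fun η => W i + K * η) (𝓝[>] 0) (𝓝 (W i)) :=
    ((continuous_const.add (continuous_const.mul continuous_id)).tendsto' 0 _
      (by simp)).mono_left nhdsWithin_le_nhds
  refine ge_of_tendsto hlim (eventually_of_mem (Ioo_mem_nhdsGT hη₀) fun η ⟨hη, hηη₀⟩ => ?_)
  obtain ⟨p, hp⟩ := hrd.exists_residual_gt hV hη
  have hle : ∀ j, (A p *ᵥ (V - W)) j ≤ η := fun j => by
    rw [mulVec_sub, Pi.sub_apply]
    linarith [hp j, hW j p]
  have := hK p (hunit p fun j => by linarith [hp j]) _ η hη.le hle i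
  simp only [Pi.sub_apply] at this
  linarith

theorem le_of_tendsto_residual {K : ℝ} (hK : IsInverseBound A K) {p : ℕ → ∀ i, P i}
    (hp : ∀ ℓ, IsUnit (A (p ℓ)).det) {V W : Fin n → ℝ}
    (hW : Tendsto (fun ℓ => y (p ℓ) - A (p ℓ) *ᵥ W) atTop (𝓝 0))
    (hV : IsBellmanSubsol A y V) : W ≤ V := by
  set r : ℕ → ℝ := fun ℓ => ∑ j, |y (p ℓ) j - (A (p ℓ) *ᵥ W) j|
  have hr : Tendsto r atTop (𝓝 0) := by
    simpa using tendsto_finsetSum univ fun j _ => (tendsto_pi_nhds.1 hW j).abs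
  intro i
  refine ge_of_tendsto (by simpa using hr.const_mul K |>.const_add (V i)) (.of_forall fun ℓ => ?_)
  have hle : ∀ j, (A (p ℓ) *ᵥ (W - V)) j ≤ r ℓ := fun j => by
    rw [mulVec_sub, Pi.sub_apply]
    have := single_le_sum (fun k _ => abs_nonneg (y (p ℓ) k - (A (p ℓ) *ᵥ W) k)) (mem_univ j)
    linarith [hV j (p ℓ), neg_abs_le (y (p ℓ) j - (A (p ℓ) *ᵥ W) j)]
  have := hK (p ℓ) (hp ℓ) _ _ (sum_nonneg fun _ _ => abs_nonneg _) hle i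
  simp only [Pi.sub_apply] at this
  linarith

structure IsPolicyIteration (A : (∀ i, P i) → Matrix (Fin n) (Fin n) ℝ)
    (y : (∀ i, P i) → Fin n → ℝ) (P' : ∀ i, Set (P i)) (ε : ℕ → ℝ) (U : ℕ → Fin n → ℝ)
    (Pc : ℕ → ∀ i, P i) : Prop where
  mem : ∀ ℓ i, Pc ℓ i ∈ P' i
  residual_le : ∀ ℓ i (p : ∀ i, P i), (∀ i, p i ∈ P' i) →
    y p i - (A p *ᵥ U ℓ) i ≤ y (Pc ℓ) i - (A (Pc ℓ) *ᵥ U ℓ) i + ε ℓ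
  mulVec_eq : ∀ ℓ, A (Pc ℓ) *ᵥ U (ℓ + 1) = y (Pc ℓ)

namespace IsPolicyIteration

variable {P' : ∀ i, Set (P i)} {ε : ℕ → ℝ} {U : ℕ → Fin n → ℝ} {Pc : ℕ → ∀ i, P i}
  {K : ℝ}

lemma sub_succ_le (hPI : IsPolicyIteration A y P' ε U Pc) (hK : IsInverseBound A K)
    (hunit : ∀ ℓ, IsUnit (A (Pc ℓ)).det) (hε : ∀ ℓ, 0 ≤ ε ℓ) (ℓ : ℕ) (i : Fin n) :
    U (ℓ + 1) i - U (ℓ + 2) i ≤ K * ε (ℓ + 1) := by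
  have hle : ∀ j, (A (Pc (ℓ + 1)) *ᵥ (U (ℓ + 1) - U (ℓ + 2))) j ≤ ε (ℓ + 1) := fun j => by
    have h := hPI.residual_le (ℓ + 1) j (Pc ℓ) (hPI.mem ℓ)
    rw [hPI.mulVec_eq ℓ] at h
    rw [mulVec_sub, Pi.sub_apply, hPI.mulVec_eq (ℓ + 1)]
    linarith
  simpa using hK _ (hunit (ℓ + 1)) _ _ (hε (ℓ + 1)) hle i

lemma le_mul_max (hPI : IsPolicyIteration A y P' ε U Pc) (hK : IsInverseBound A K)
    (hunit : ∀ ℓ, IsUnit (A (Pc ℓ)).det) {C : ℝ} (hy : ∀ p i, y p i ≤ C) (ℓ : ℕ) (i : Fin n) :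
    U (ℓ + 1) i ≤ K * max C 0 :=
  hK _ (hunit ℓ) _ _ (le_max_right _ _)
    (fun j => by rw [hPI.mulVec_eq]; exact (hy _ j).trans (le_max_left _ _)) i

lemma exists_tendsto (hPI : IsPolicyIteration A y P' ε U Pc) (hK : IsInverseBound A K)
    (hK0 : 0 ≤ K) (hunit : ∀ ℓ, IsUnit (A (Pc ℓ)).det) (hε : ∀ ℓ, 0 ≤ ε ℓ) (hsum : Summable ε)
    {C : ℝ} (hy : ∀ p i, y p i ≤ C) : ∃ U', Tendsto U atTop (𝓝 U') := by
  have hrow : ∀ i, ∃ a, Tendsto (fun ℓ => U ℓ i) atTop (𝓝 a) := fun i => by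
    obtain ⟨a, ha⟩ := exists_tendsto_of_le_add_of_bddAbove (u := fun ℓ => U (ℓ + 1) i)
      (fun ℓ => mul_nonneg hK0 (hε (ℓ + 1)))
      (((summable_nat_add_iff 1).2 hsum).mul_left K)
      (fun ℓ => by linarith [hPI.sub_succ_le hK hunit hε ℓ i])
      (hPI.le_mul_max hK hunit hy · i)
    exact ⟨a, (tendsto_add_atTop_iff_nat 1).1 ha⟩
  choose a ha using hrow
  exact ⟨a, tendsto_pi_nhds.2 ha⟩

lemma tendsto_residual (hPI : IsPolicyIteration A y P' ε U Pc) {C : ℝ}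
    (hA : ∀ p i j, |A p i j| ≤ C) {U' : Fin n → ℝ} (hU : Tendsto U atTop (𝓝 U')) :
    Tendsto (fun ℓ => y (Pc ℓ) - A (Pc ℓ) *ᵥ U') atTop (𝓝 0) := by
  have hsub : Tendsto (fun ℓ => U (ℓ + 1) - U') atTop (𝓝 0) := by
    simpa using ((tendsto_add_atTop_iff_nat 1).2 hU).sub_const U'
  simpa [← hPI.mulVec_eq, mulVec_sub] using tendsto_mulVec_zero (fun ℓ => hA (Pc ℓ)) hsub

lemma tendsto_residual_self (hPI : IsPolicyIteration A y P' ε U Pc) {C : ℝ}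
    (hA : ∀ p i j, |A p i j| ≤ C) {U' : Fin n → ℝ} (hU : Tendsto U atTop (𝓝 U')) :
    Tendsto (fun ℓ => y (Pc ℓ) - A (Pc ℓ) *ᵥ U ℓ) atTop (𝓝 0) := by
  have hsub : Tendsto (fun ℓ => U (ℓ + 1) - U ℓ) atTop (𝓝 0) := by
    simpa using ((tendsto_add_atTop_iff_nat 1).2 hU).sub hU
  simpa [← hPI.mulVec_eq, mulVec_sub] using tendsto_mulVec_zero (fun ℓ => hA (Pc ℓ)) hsub

lemma isLUB_residual (hPI : IsPolicyIteration A y P' ε U Pc) {C : ℝ}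
    (hA : ∀ p i j, |A p i j| ≤ C) (hε : Tendsto ε atTop (𝓝 0)) {U' : Fin n → ℝ}
    (hU : Tendsto U atTop (𝓝 U')) (i : Fin n) :
    IsLUB (Set.range fun p : {p : ∀ i, P i // ∀ i, p i ∈ P' i} =>
      y p.1 i - (A p.1 *ᵥ U') i) 0 := by
  refine isLUB_of_mem_closure ?_ (mem_closure_of_tendsto
    (tendsto_pi_nhds.1 (hPI.tendsto_residual hA hU) i)
    (.of_forall fun ℓ => ⟨⟨Pc ℓ, hPI.mem ℓ⟩, rfl⟩))
  rintro _ ⟨⟨q, hq⟩, rfl⟩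
  have hlhs : Tendsto (fun ℓ => y q i - (A q *ᵥ U ℓ) i) atTop (𝓝 (y q i - (A q *ᵥ U') i)) :=
    (((continuous_apply i).comp (continuous_const.matrix_mulVec continuous_id)).tendsto U'
      |>.comp hU).const_sub _
  have hrhs := (tendsto_pi_nhds.1 (hPI.tendsto_residual_self hA hU) i).add hε
  rw [add_zero] at hrhs
  exact le_of_tendsto_of_tendsto' hlhs hrhs fun ℓ => hPI.residual_le ℓ i q hq

end IsPolicyIteration

end Bellman

theorem restricted_policy_iteration_converges_general
    {n : ℕ} {P : Fin n → Type*}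
    (A : (∀ i, P i) → Matrix (Fin n) (Fin n) ℝ) (y : (∀ i, P i) → Fin n → ℝ)
    (hrd : RowDecoupled A y)
    (h1 : H1 A) (h2 : H2 A y) (h3 : H3 A) (h4 : H4 A y)
    (P' : ∀ i, Set (P i))
    (hns : ∀ p : ∀ i, P i, (∀ i, p i ∈ P' i) → IsUnit (A p).det)
    (hinv : ∀ U : Fin n → ℝ,
      (∀ i, IsLUB
        (Set.range fun p : {p : ∀ i, P i // ∀ i, p i ∈ P' i} =>
          y p.1 i - (A p.1).mulVec U i) 0) →
      ∀ (i : Fin n) (p : ∀ i, P i), y p i - (A p).mulVec U i ≤ 0)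
    (U : ℕ → Fin n → ℝ) (ε : ℕ → ℝ) (Pc : ℕ → ∀ i, P i)
    (hPc : ∀ ℓ i, Pc ℓ i ∈ P' i)
    (hε : ∀ ℓ, 0 < ε ℓ) (hsum : Summable ε)
    (happrox : ∀ (ℓ : ℕ) (i : Fin n) (p : ∀ i, P i), (∀ i, p i ∈ P' i) →
      y p i - (A p).mulVec (U ℓ) i ≤ y (Pc ℓ) i - (A (Pc ℓ)).mulVec (U ℓ) i + ε ℓ)
    (hsolve : ∀ ℓ, (A (Pc ℓ)).mulVec (U (ℓ + 1)) = y (Pc ℓ)) :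
    ∃ Ustar : Fin n → ℝ, Tendsto U atTop (𝓝 Ustar) ∧
      IsBellmanSol A y Ustar ∧ ∀ V, IsBellmanSol A y V → V = Ustar := by
  obtain ⟨K, hK0, hK⟩ := h1.exists_isInverseBound h3
  obtain ⟨C, hC⟩ := h2
  have hA : ∀ p i j, |A p i j| ≤ C := fun p => (hC p).1
  have hPI : IsPolicyIteration A y P' ε U Pc := ⟨hPc, happrox, hsolve⟩
  have hunit : ∀ ℓ, IsUnit (A (Pc ℓ)).det := fun ℓ => hns _ (hPc ℓ)
  obtain ⟨Ustar, hlim⟩ := hPI.exists_tendsto hK hK0 hunit (fun ℓ => (hε ℓ).le) hsum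
    fun p i => (le_abs_self _).trans ((hC p).2 i)
  have hres := hPI.tendsto_residual hA hlim
  have hsub : IsBellmanSubsol A y Ustar :=
    hinv Ustar (hPI.isLUB_residual hA hsum.tendsto_atTop_zero hlim)
  refine ⟨Ustar, hlim, isBellmanSol_of_tendsto_residual hsub hres, fun V hV => ?_⟩
  exact le_antisymm (hV.le_of_isBellmanSubsol hrd h3 h4 hK hsub)
    (le_of_tendsto_residual hK hunit hres hV.isBellmanSubsol)

/-- Policy iteration on a restricted control set: assume (H1)–(H4), that `A(P)` is
nonsingular for every control `P` in the restricted set `𝒫′ = 𝒫₁′ × ⋯ × 𝒫ₙ′`, and that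
every solution of the Bellman problem over `𝒫′` is subharmonic for the full problem
(i.e. `sup_{P∈𝒫} {−A(P)U + y(P)} ≤ 0` entrywise). Then the ε-policy-iteration sequence
computed over `𝒫′` converges to the unique solution of the Bellman problem over `𝒫`. -/
theorem restricted_policy_iteration_converges
    {n : ℕ} (hn : 1 ≤ n) {P : Fin n → Type*} [∀ i, Nonempty (P i)]
    (A : (∀ i, P i) → Matrix (Fin n) (Fin n) ℝ) (y : (∀ i, P i) → Fin n → ℝ)
    (hrd : RowDecoupled A y)
    (h1 : H1 A) (h2 : H2 A y) (h3 : H3 A) (h4 : H4 A y)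
    (P' : ∀ i, Set (P i)) (hP'ne : ∀ i, (P' i).Nonempty)
    (hns : ∀ p : ∀ i, P i, (∀ i, p i ∈ P' i) → IsUnit (A p).det)
    (hinv : ∀ U : Fin n → ℝ,
      (∀ i, IsLUB
        (Set.range fun p : {p : ∀ i, P i // ∀ i, p i ∈ P' i} =>
          y p.1 i - (A p.1).mulVec U i) 0) →
      ∀ (i : Fin n) (p : ∀ i, P i), y p i - (A p).mulVec U i ≤ 0)
    (U : ℕ → Fin n → ℝ) (ε : ℕ → ℝ) (Pc : ℕ → ∀ i, P i)
    (hPc : ∀ ℓ i, Pc ℓ i ∈ P' i)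
    (hε : ∀ ℓ, 0 < ε ℓ) (hsum : Summable ε)
    (happrox : ∀ (ℓ : ℕ) (i : Fin n) (p : ∀ i, P i), (∀ i, p i ∈ P' i) →
      y p i - (A p).mulVec (U ℓ) i ≤ y (Pc ℓ) i - (A (Pc ℓ)).mulVec (U ℓ) i + ε ℓ)
    (hsolve : ∀ ℓ, (A (Pc ℓ)).mulVec (U (ℓ + 1)) = y (Pc ℓ)) :
    ∃ Ustar : Fin n → ℝ, Tendsto U atTop (𝓝 Ustar) ∧
      IsBellmanSol A y Ustar ∧ ∀ V, IsBellmanSol A y V → V = Ustar :=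
  restricted_policy_iteration_converges_general A y hrd h1 h2 h3 h4 P' hns hinv U ε Pc hPc hε hsum
    happrox hsolve
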